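/- arXiv:0705.0519 — 3 statements merged into one kernel-verified Lean document; each statement's English description precedes it below -/
import Mathlib

section
/- For the Polya urn proportion martingale, the conditional bias vanishes: E[X_∞ − X_n | F_n] = 0, and the expected conditional variance satisfies E[(X_∞ − X_n)²] = 1/(6n) + o(1/n) as n → ∞. -/
/-!
Writing `Bₙ = 1{Uₙ₊₁ ≤ Xₙ}`, the recursion reads `Xₙ₊₁ = Xₙ + (Bₙ - Xₙ)/(n+3)`. Since `Uₙ₊₁` is
uniform and independent of `Fₙ`, freezing `Xₙ` gives `E[Bₙ | Fₙ] = Xₙ`, so `X` is a martingale with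
values in `[0,1]`. Bounded a.e. convergence is convergence in `L¹`, hence `E[X∞ | Fₙ] = Xₙ`, which
is the first claim. For the second, orthogonality of martingale increments gives
`E[(X∞ - Xₙ)²] = E[X∞²] - E[Xₙ²] = 1/3 - E[Xₙ²]`, and the same argument applied to one step gives
`E[Xₙ₊₁²] = E[Xₙ²] + (1/2 - E[Xₙ²])/(n+3)²`, solved by `E[Xₙ²] = 1/3 - 1/(6(n+2))`.
So `E[(X∞ - Xₙ)²] = 1/(6(n+2))` exactly, which differs from `1/(6n)` by `O(1/n²)`.
-/

open MeasureTheory ProbabilityTheory Filter Asymptotics Set Topology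

namespace MeasureTheory

variable {Ω : Type*} {m m₀ : MeasurableSpace Ω} {μ : Measure[m₀] Ω}

theorem setIntegral_eq_integral_indicator_one_mul {s : Set Ω} (hs : MeasurableSet s)
    (f : Ω → ℝ) : ∫ ω in s, f ω ∂μ = ∫ ω, s.indicator 1 ω * f ω ∂μ := by
  rw [← integral_indicator hs]
  congr with ω
  by_cases hω : ω ∈ s <;> simp [hω]

theorem integral_sub_sq_of_condExp_eq (hm : m ≤ m₀) [IsFiniteMeasure μ] {X Y : Ω → ℝ}
    (hX : MemLp X 2 μ) (hXY : μ[X | m] =ᵐ[μ] Y) :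
    ∫ ω, (X ω - Y ω) ^ 2 ∂μ = ∫ ω, X ω ^ 2 ∂μ - ∫ ω, Y ω ^ 2 ∂μ := by
  have hsq : Integrable ((X - μ[X | m]) ^ 2) μ := (hX.sub (hX.condExp one_le_two)).integrable_sq
  calc ∫ ω, (X ω - Y ω) ^ 2 ∂μ = ∫ ω, (X ω - μ[X | m] ω) ^ 2 ∂μ := by
        refine integral_congr_ae ?_
        filter_upwards [hXY] with ω hω
        rw [hω]
    _ = ∫ ω, (μ[X ^ 2 | m] ω - μ[X | m] ω ^ 2) ∂μ := by
        rw [← setIntegral_univ, ← setIntegral_condVar (hm := hm) hsq MeasurableSet.univ,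
          setIntegral_univ]
        refine integral_congr_ae ?_
        filter_upwards [condVar_ae_eq_condExp_sq_sub_sq_condExp hm hX] with ω hω
        simp [hω]
    _ = ∫ ω, X ω ^ 2 ∂μ - ∫ ω, Y ω ^ 2 ∂μ := by
        rw [integral_sub integrable_condExp (hX.condExp one_le_two).integrable_sq,
          integral_condExp hm]
        congr 1
        refine integral_congr_ae ?_
        filter_upwards [hXY] with ω hω
        simp [hω]

theorem condExp_sub_ae_eq_zero (hm : m ≤ m₀) [SigmaFinite (μ.trim hm)] {X Y : Ω → ℝ}
    (hY : StronglyMeasurable[m] Y) (hX : Integrable X μ) (hYint : Integrable Y μ)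
    (hXY : μ[X | m] =ᵐ[μ] Y) : μ[X - Y | m] =ᵐ[μ] 0 := by
  filter_upwards [condExp_sub hX hYint m, hXY] with ω h₁ h₂
  rw [h₁, Pi.sub_apply, h₂, condExp_of_stronglyMeasurable hm hY hYint, sub_self, Pi.zero_apply]

theorem condExp_add_mul_sub (hm : m ≤ m₀) [SigmaFinite (μ.trim hm)] {X Y : Ω → ℝ}
    (hY : StronglyMeasurable[m] Y) (hX : Integrable X μ) (hYint : Integrable Y μ)
    (hXY : μ[X | m] =ᵐ[μ] Y) (c : ℝ) :
    μ[fun ω => Y ω + c * (X ω - Y ω) | m] =ᵐ[μ] Y := by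
  change μ[Y + c • (X - Y) | m] =ᵐ[μ] Y
  filter_upwards [condExp_add hYint ((hX.sub hYint).smul c) m, condExp_smul c (X - Y) m,
    condExp_sub_ae_eq_zero hm hY hX hYint hXY] with ω h₁ h₂ h₃
  rw [h₁, Pi.add_apply, h₂, Pi.smul_apply, h₃, condExp_of_stronglyMeasurable hm hY hYint]
  simp

theorem martingale_of_eq_add_mul_sub {ℱ : Filtration ℕ m₀} [IsFiniteMeasure μ]
    {X B : ℕ → Ω → ℝ} {c : ℕ → ℝ} (hX : StronglyAdapted ℱ X) (hXint : ∀ n, Integrable (X n) μ)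
    (hBint : ∀ n, Integrable (B n) μ) (hB : ∀ n, μ[B n | ℱ n] =ᵐ[μ] X n)
    (hstep : ∀ n ω, X (n + 1) ω = X n ω + c n * (B n ω - X n ω)) :
    Martingale X ℱ μ := by
  refine martingale_nat hX hXint fun n => ?_
  rw [show X (n + 1) = _ from funext (hstep n)]
  exact (condExp_add_mul_sub (ℱ.le n) (hX n) (hBint n) (hXint n) (hB n) (c n)).symm

theorem tendsto_eLpNorm_one_of_tendsto_ae_of_bound [IsFiniteMeasure μ] {f : ℕ → Ω → ℝ}
    {g : Ω → ℝ} {C : ℝ} (hf : ∀ n, AEStronglyMeasurable (f n) μ) (hfC : ∀ n ω, ‖f n ω‖ ≤ C)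
    (hlim : ∀ᵐ ω ∂μ, Tendsto (fun n => f n ω) atTop (𝓝 (g ω))) :
    Tendsto (fun n => eLpNorm (f n - g) 1 μ) atTop (𝓝 0) := by
  simp_rw [eLpNorm_one_eq_lintegral_enorm, Pi.sub_apply, ← ofReal_norm]
  exact tendsto_lintegral_norm_of_dominated_convergence hf (hasFiniteIntegral_const C)
    (fun n => ae_of_all _ (hfC n)) hlim

theorem MemLp.of_tendsto_ae_of_bound [IsFiniteMeasure μ] (p : ENNReal) {f : ℕ → Ω → ℝ}
    {g : Ω → ℝ} {C : ℝ} (hf : ∀ n, AEStronglyMeasurable (f n) μ) (hfC : ∀ n ω, ‖f n ω‖ ≤ C)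
    (hlim : ∀ᵐ ω ∂μ, Tendsto (fun n => f n ω) atTop (𝓝 (g ω))) : MemLp g p μ := by
  refine .of_bound (aestronglyMeasurable_of_tendsto_ae atTop hf hlim) C ?_
  filter_upwards [hlim] with ω hω
  exact le_of_tendsto' hω.norm fun n => hfC n ω

theorem Martingale.condExp_ae_eq_of_tendsto_ae_of_bound {ℱ : Filtration ℕ m₀}
    [IsFiniteMeasure μ] {f : ℕ → Ω → ℝ} {g : Ω → ℝ} {C : ℝ} (hf : Martingale f ℱ μ)
    (hfC : ∀ n ω, ‖f n ω‖ ≤ C) (hlim : ∀ᵐ ω ∂μ, Tendsto (fun n => f n ω) atTop (𝓝 (g ω)))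
    (n : ℕ) : μ[g | ℱ n] =ᵐ[μ] f n := by
  have hfm : ∀ n, AEStronglyMeasurable (f n) μ := fun n => (hf.integrable n).aestronglyMeasurable
  have hg : Integrable g μ := memLp_one_iff_integrable.1 (.of_tendsto_ae_of_bound 1 hfm hfC hlim)
  exact (hf.eq_condExp_of_tendsto_eLpNorm hg
    (tendsto_eLpNorm_one_of_tendsto_ae_of_bound hfm hfC hlim) n).symm

end MeasureTheory

namespace ProbabilityTheory

theorem integral_sq_of_map_eq_uniform {Ω : Type*} [MeasurableSpace Ω] {μ : Measure Ω}
    {Y : Ω → ℝ} (hY : Measurable Y) (hlaw : μ.map Y = volume.restrict (Icc (0 : ℝ) 1)) :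
    ∫ ω, Y ω ^ 2 ∂μ = 1 / 3 := by
  rw [← integral_map hY.aemeasurable (continuous_pow 2).aestronglyMeasurable, hlaw,
    integral_Icc_eq_integral_Ioc, ← intervalIntegral.integral_of_le zero_le_one, integral_pow]
  norm_num

theorem integral_ite_le_uniform {x : ℝ} (hx : x ∈ Icc (0 : ℝ) 1) :
    ∫ u, (if u ≤ x then (1 : ℝ) else 0) ∂(volume.restrict (Icc (0 : ℝ) 1)) = x := by
  have hind : (fun u : ℝ => if u ≤ x then (1 : ℝ) else 0) = (Iic x).indicator 1 := by
    ext u; simp [indicator_apply]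
  have hIcc : Iic x ∩ Icc 0 1 = Icc 0 x := by
    ext u
    simp only [mem_inter_iff, mem_Iic, mem_Icc]
    exact ⟨fun h => ⟨h.2.1, h.1⟩, fun h => ⟨h.2, h.1, h.2.trans hx.2⟩⟩
  rw [hind, integral_indicator_one measurableSet_Iic, measureReal_restrict_apply measurableSet_Iic,
    hIcc, Real.volume_real_Icc_of_le hx.1, sub_zero]

variable {Ω β γ : Type*} {m m₀ : MeasurableSpace Ω} [MeasurableSpace β] [MeasurableSpace γ]
  {μ : Measure[m₀] Ω}

theorem IndepFun.integral_comp_prod [IsFiniteMeasure μ] {T : Ω → β} {U : Ω → γ}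
    (h : IndepFun T U μ) (hT : Measurable T) (hU : Measurable U) {φ : β × γ → ℝ}
    (hφ : StronglyMeasurable φ) (hφint : Integrable (fun ω => φ (T ω, U ω)) μ) :
    ∫ ω, φ (T ω, U ω) ∂μ = ∫ t, ∫ u, φ (t, u) ∂(μ.map U) ∂(μ.map T) := by
  have hmap : μ.map (fun ω => (T ω, U ω)) = (μ.map T).prod (μ.map U) :=
    (indepFun_iff_map_prod_eq_prod_map_map hT.aemeasurable hU.aemeasurable).mp h
  have hTU : AEMeasurable (fun ω => (T ω, U ω)) μ := (hT.prodMk hU).aemeasurable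
  rw [← integral_map hTU hφ.aestronglyMeasurable, hmap]
  refine integral_prod φ ?_
  rwa [← hmap, integrable_map_measure hφ.aestronglyMeasurable hTU]

/-- The freezing lemma. -/
theorem condExp_comp_prod_of_indep [IsProbabilityMeasure μ] (hm : m ≤ m₀) {T : Ω → β}
    {U : Ω → γ} (hT : Measurable[m] T) (hU : Measurable U)
    (hindep : Indep (MeasurableSpace.comap U inferInstance) m μ)
    {φ : β × γ → ℝ} (hφ : StronglyMeasurable φ) {C : ℝ} (hφC : ∀ p, ‖φ p‖ ≤ C) :
    μ[fun ω => φ (T ω, U ω) | m] =ᵐ[μ] fun ω => ∫ u, φ (T ω, u) ∂(μ.map U) := by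
  have : IsProbabilityMeasure (μ.map U) := Measure.isProbabilityMeasure_map hU.aemeasurable
  set g : β → ℝ := fun t => ∫ u, φ (t, u) ∂(μ.map U)
  have hg : StronglyMeasurable g := hφ.integral_prod_right'
  have hgC : ∀ t, ‖g t‖ ≤ C := fun t => by
    simpa using norm_integral_le_of_norm_le_const (μ := μ.map U) (ae_of_all _ fun u => hφC (t, u))
  have hT₀ : Measurable T := hT.mono hm le_rfl
  have hφint : Integrable (fun ω => φ (T ω, U ω)) μ :=
    .of_bound (hφ.comp_measurable (hT₀.prodMk hU)).aestronglyMeasurable C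
      (ae_of_all _ fun _ => hφC _)
  have hgint : Integrable (fun ω => g (T ω)) μ :=
    .of_bound (hg.comp_measurable hT₀).aestronglyMeasurable C (ae_of_all _ fun _ => hgC _)
  have hgT : StronglyMeasurable[m] fun ω => g (T ω) := hg.comp_measurable hT
  refine (ae_eq_condExp_of_forall_setIntegral_eq hm hφint (fun _ _ _ => hgint.integrableOn)
    (fun s hs _ => ?_) hgT.aestronglyMeasurable).symm
  -- Pairing `T` with `1ₛ` turns the set integral into an integral of a function of `(T', U)`.
  set T' : Ω → β × ℝ := fun ω => (T ω, s.indicator 1 ω)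
  have hT' : Measurable[m] T' := hT.prodMk (measurable_const.indicator hs)
  have hindep' : IndepFun T' U μ := indep_of_indep_of_le_left hindep.symm hT'.comap_le
  have hψ : StronglyMeasurable fun p : (β × ℝ) × γ => p.1.2 * φ (p.1.1, p.2) :=
    (measurable_snd.comp measurable_fst).stronglyMeasurable.mul
      (hφ.comp_measurable ((measurable_fst.comp measurable_fst).prodMk measurable_snd))
  have hψint : Integrable (fun ω => (T' ω).2 * φ ((T' ω).1, U ω)) μ :=
    hφint.bdd_mul (c := 1) (measurable_one.indicator (hm s hs)).aestronglyMeasurable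
      (ae_of_all _ fun ω => by by_cases hω : ω ∈ s <;> simp [T', hω])
  rw [setIntegral_eq_integral_indicator_one_mul (hm s hs),
    setIntegral_eq_integral_indicator_one_mul (hm s hs),
    hindep'.integral_comp_prod (hT'.mono hm le_rfl) hU hψ hψint]
  simp only [integral_const_mul]
  exact (integral_map (f := fun p : β × ℝ => p.2 * g p.1) (hT'.mono hm le_rfl).aemeasurable
    (measurable_snd.stronglyMeasurable.mul
      (hg.comp_measurable measurable_fst)).aestronglyMeasurable).symm

theorem condExp_ite_le_of_indep_uniform [IsProbabilityMeasure μ] (hm : m ≤ m₀) {U Y : Ω → ℝ}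
    (hU : Measurable U) (hUlaw : μ.map U = volume.restrict (Icc 0 1))
    (hindep : Indep (MeasurableSpace.comap U inferInstance) m μ) (hY : Measurable[m] Y)
    (hY01 : ∀ ω, Y ω ∈ Icc (0 : ℝ) 1) :
    μ[fun ω => if U ω ≤ Y ω then (1 : ℝ) else 0 | m] =ᵐ[μ] Y := by
  have hφ : StronglyMeasurable fun p : ℝ × ℝ => if p.2 ≤ p.1 then (1 : ℝ) else 0 :=
    (Measurable.ite (measurableSet_le measurable_snd measurable_fst) measurable_const
      measurable_const).stronglyMeasurable
  refine (condExp_comp_prod_of_indep hm hY hU hindep hφ (C := 1) fun p => ?_).trans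
    (ae_of_all _ fun ω => ?_)
  · split_ifs <;> simp
  · simp only [hUlaw, integral_ite_le_uniform (hY01 ω)]

end ProbabilityTheory

theorem Real.norm_le_one_of_mem_Icc {x : ℝ} (hx : x ∈ Icc (0 : ℝ) 1) : ‖x‖ ≤ 1 :=
  abs_le.2 ⟨by linarith [hx.1], hx.2⟩

theorem Convex.mem_of_add_mul_sub_recursion {α : Type*} {s : Set ℝ} (hs : Convex ℝ s)
    {X B : ℕ → α → ℝ} {c : ℕ → ℝ} (hX0 : ∀ a, X 0 a ∈ s) (hB : ∀ n a, B n a ∈ s)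
    (hc : ∀ n, c n ∈ Icc (0 : ℝ) 1) (hstep : ∀ n a, X (n + 1) a = X n a + c n * (B n a - X n a))
    (n : ℕ) (a : α) : X n a ∈ s := by
  induction n with
  | zero => exact hX0 a
  | succ n ih => rw [hstep]; exact hs.add_smul_sub_mem ih (hB n a) (hc n)

theorem isLittleO_one_div_add_two_sub_one_div :
    (fun n : ℕ => 1 / (6 * ((n : ℝ) + 2)) - 1 / (6 * (n : ℝ))) =o[atTop]
      fun n : ℕ => 1 / (n : ℝ) := by
  have hlim : Tendsto (fun n : ℕ => -1 / (3 * ((n : ℝ) + 2))) atTop (𝓝 0) :=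
    tendsto_const_nhds.div_atTop <|
      (tendsto_natCast_atTop_atTop.atTop_add tendsto_const_nhds).const_mul_atTop (by norm_num)
  refine (((isLittleO_one_iff ℝ).2 hlim).mul_isBigO
    (isBigO_refl (fun n : ℕ => 1 / (n : ℝ)) atTop)).congr' ?_ (by simp)
  filter_upwards [eventually_ge_atTop 1] with n hn
  have : (n : ℝ) ≠ 0 := by positivity
  field_simp
  ring

theorem mem_Icc_of_polya {α : Type*} {X B : ℕ → α → ℝ} (hX0 : ∀ a, X 0 a = 1 / 2)
    (hB01 : ∀ n a, B n a = 0 ∨ B n a = 1)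
    (hstep : ∀ n a, X (n + 1) a = X n a + 1 / ((n : ℝ) + 3) * (B n a - X n a)) (n : ℕ) (a : α) :
    X n a ∈ Icc (0 : ℝ) 1 := by
  refine (convex_Icc 0 1).mem_of_add_mul_sub_recursion (fun a => ?_) (fun n a => ?_)
    (fun n => ⟨by positivity, ?_⟩) hstep n a
  · rw [hX0]; norm_num
  · rcases hB01 n a with h | h <;> simp [h]
  · rw [div_le_one (by positivity)]
    linarith [n.cast_nonneg' (α := ℝ)]

theorem integral_sq_of_polya {Ω : Type*} {m₀ : MeasurableSpace Ω} {μ : Measure[m₀] Ω}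
    [IsProbabilityMeasure μ] {ℱ : Filtration ℕ m₀} {X B : ℕ → Ω → ℝ} (hX : Martingale X ℱ μ)
    (hX0 : ∀ ω, X 0 ω = 1 / 2) (hBmeas : ∀ n, Measurable (B n)) (hB01 : ∀ n ω, B n ω = 0 ∨ B n ω = 1)
    (hB : ∀ n, μ[B n | ℱ n] =ᵐ[μ] X n)
    (hstep : ∀ n ω, X (n + 1) ω = X n ω + 1 / ((n : ℝ) + 3) * (B n ω - X n ω)) (n : ℕ) :
    ∫ ω, X n ω ^ 2 ∂μ = 1 / 3 - 1 / (6 * ((n : ℝ) + 2)) := by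
  have hXL2 : ∀ n, MemLp (X n) 2 μ := fun n =>
    .of_bound (hX.integrable n).aestronglyMeasurable 1
      (ae_of_all _ fun ω => Real.norm_le_one_of_mem_Icc (mem_Icc_of_polya hX0 hB01 hstep n ω))
  have hBsq : ∀ n ω, B n ω ^ 2 = B n ω := fun n ω => by rcases hB01 n ω with h | h <;> simp [h]
  have hBL2 : ∀ n, MemLp (B n) 2 μ := fun n =>
    .of_bound (hBmeas n).aestronglyMeasurable 1 (ae_of_all _ fun ω => by
      rcases hB01 n ω with h | h <;> simp [h])
  have hBmean : ∀ n, ∫ ω, B n ω ∂μ = 1 / 2 := fun n => by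
    rw [← integral_condExp (ℱ.le n), integral_congr_ae (hB n), ← setIntegral_univ,
      ← hX.setIntegral_eq (Nat.zero_le n) MeasurableSet.univ, setIntegral_univ]
    simp [hX0]
  induction n with
  | zero => simp [hX0]; norm_num
  | succ n ih =>
    have hincr := integral_sub_sq_of_condExp_eq (ℱ.le n) (hXL2 (n + 1))
      (hX.condExp_ae_eq n.le_succ)
    have hB2 := integral_sub_sq_of_condExp_eq (ℱ.le n) (hBL2 n) (hB n)
    have hstep2 : ∫ ω, (X (n + 1) ω - X n ω) ^ 2 ∂μ
        = (1 / ((n : ℝ) + 3)) ^ 2 * ∫ ω, (B n ω - X n ω) ^ 2 ∂μ := by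
      rw [← integral_const_mul]
      congr with ω
      rw [hstep]
      ring
    simp only [hBsq, hBmean] at hB2
    rw [hstep2, hB2, ih, eq_sub_iff_add_eq] at hincr
    rw [← hincr]
    push_cast
    field_simp
    ring

/-- For the Polya urn: the conditional bias of `X∞ - X n` given `F n` vanishes, and
`E[(X∞ - X n)²] = 1/(6n) + o(1/n)`. -/
theorem stmt3 {Ω : Type*} [MeasurableSpace Ω] (μ : Measure Ω) [IsProbabilityMeasure μ]
    (U : ℕ → Ω → ℝ) (X : ℕ → Ω → ℝ)
    (hUmeas : ∀ n, Measurable (U n))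
    (hXmeas : ∀ n, Measurable (X n))
    (hUlaw : ∀ n, μ.map (U n) = volume.restrict (Set.Icc (0 : ℝ) 1))
    (F : ℕ → MeasurableSpace Ω)
    (hF : ∀ n, F n = ⨆ k ∈ Finset.range (n + 1), MeasurableSpace.comap (X k) inferInstance)
    (hindep : ∀ n, Indep (MeasurableSpace.comap (U (n + 1)) inferInstance) (F n) μ)
    (hX0 : ∀ ω, X 0 ω = 1 / 2)
    (hrec : ∀ n ω, X (n + 1) ω
      = X n ω + (1 / ((n : ℝ) + 3)) * ((if U (n + 1) ω ≤ X n ω then (1 : ℝ) else 0) - X n ω))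
    (Xinf : Ω → ℝ) (hXinfmeas : Measurable Xinf)
    (hconv : ∀ᵐ ω ∂μ, Tendsto (fun n => X n ω) atTop (nhds (Xinf ω)))
    (hunif : μ.map Xinf = volume.restrict (Set.Icc (0 : ℝ) 1)) :
    (∀ n, condExp (F n) μ (fun ω => Xinf ω - X n ω) =ᵐ[μ] fun _ => (0 : ℝ)) ∧
    (fun n : ℕ => (∫ ω, (Xinf ω - X n ω) ^ 2 ∂μ) - 1 / (6 * (n : ℝ)))
      =o[atTop] (fun n : ℕ => 1 / (n : ℝ)) := by
  set B : ℕ → Ω → ℝ := fun n ω => if U (n + 1) ω ≤ X n ω then 1 else 0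
  have hB01 : ∀ n ω, B n ω = 0 ∨ B n ω = 1 := fun n ω => by
    by_cases h : U (n + 1) ω ≤ X n ω <;> simp [B, h]
  have hBmeas : ∀ n, Measurable (B n) := fun n =>
    Measurable.ite (measurableSet_le (hUmeas _) (hXmeas n)) measurable_const measurable_const
  have hX01 : ∀ n ω, X n ω ∈ Icc (0 : ℝ) 1 := mem_Icc_of_polya hX0 hB01 hrec
  set ℱ := Filtration.natural X fun n => (hXmeas n).stronglyMeasurable
  have hℱ : StronglyAdapted ℱ X := Filtration.stronglyAdapted_natural _
  obtain rfl : F = fun n => ℱ n := funext fun n => by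
    simp [hF n, ℱ, Filtration.natural]
  have hXC : ∀ n ω, ‖X n ω‖ ≤ 1 := fun n ω => Real.norm_le_one_of_mem_Icc (hX01 n ω)
  have hB : ∀ n, μ[B n | ℱ n] =ᵐ[μ] X n := fun n =>
    condExp_ite_le_of_indep_uniform (ℱ.le n) (hUmeas _) (hUlaw _) (hindep n) (hℱ n).measurable
      (hX01 n)
  have hmart : Martingale X ℱ μ :=
    martingale_of_eq_add_mul_sub hℱ
      (fun n => .of_bound (hXmeas n).aestronglyMeasurable 1 (ae_of_all _ (hXC n)))
      (fun n => .of_bound (hBmeas n).aestronglyMeasurable 1 (ae_of_all _ fun ω => by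
        rcases hB01 n ω with h | h <;> simp [h]))
      hB hrec
  have hcond : ∀ n, μ[Xinf | ℱ n] =ᵐ[μ] X n := hmart.condExp_ae_eq_of_tendsto_ae_of_bound hXC hconv
  have hXinfL2 : MemLp Xinf 2 μ :=
    .of_tendsto_ae_of_bound 2 (fun n => (hXmeas n).aestronglyMeasurable) hXC hconv
  refine ⟨fun n => condExp_sub_ae_eq_zero (ℱ.le n) (hℱ n) (hXinfL2.integrable one_le_two)
    (hmart.integrable n) (hcond n), ?_⟩
  have hvar : ∀ n : ℕ, ∫ ω, (Xinf ω - X n ω) ^ 2 ∂μ = 1 / (6 * ((n : ℝ) + 2)) := fun n => by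
    rw [integral_sub_sq_of_condExp_eq (ℱ.le n) hXinfL2 (hcond n),
      integral_sq_of_map_eq_uniform hXinfmeas hunif,
      integral_sq_of_polya hmart hX0 hBmeas hB01 hB hrec n]
    ring
  simp_rw [hvar]
  exact isLittleO_one_div_add_two_sub_one_div
end

section
/- Under hypotheses (H1) and (H2) with the same algebra D and sequence (α_n), hypothesis (H3) holds with symmetric bias operator à = (Ā + A̲)/2. -/
open MeasureTheory Filter

/-!
Splitting `χ(Yₙ) - χ(Y)` gives the algebraic identity
`(φ(Yₙ) - φ(Y))(χ(Yₙ) - χ(Y)) = -(φ(Y) - φ(Yₙ)) χ(Yₙ) - (φ(Yₙ) - φ(Y)) χ(Y)`,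
whose two terms, integrated and scaled by `αₙ`, are exactly the quantities of (H2) and (H1).
Hence the limit in (H3) is `-E[A̲[φ] χ] - E[Ā[φ] χ] = -2 E[((Ā + A̲)/2)[φ] χ]`.
-/

section

variable {Ω : Type*} [MeasurableSpace Ω] {μ : Measure Ω}

theorem integral_mul_sub_sub_eq {a b c d : Ω → ℝ}
    (hc : Integrable (fun ω => (b ω - a ω) * c ω) μ)
    (hd : Integrable (fun ω => (a ω - b ω) * d ω) μ) :
    ∫ ω, (a ω - b ω) * (c ω - d ω) ∂μ =
      -∫ ω, (b ω - a ω) * c ω ∂μ - ∫ ω, (a ω - b ω) * d ω ∂μ := by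
  rw [← integral_neg, ← integral_sub hc.fun_neg hd]
  congr 1 with ω
  ring

theorem tendsto_mul_integral_mul_sub_sub {α : ℕ → ℝ} {a c : ℕ → Ω → ℝ} {b d : Ω → ℝ}
    {L₁ L₂ : ℝ}
    (hc : ∀ n, Integrable (fun ω => (b ω - a n ω) * c n ω) μ)
    (hd : ∀ n, Integrable (fun ω => (a n ω - b ω) * d ω) μ)
    (h₁ : Tendsto (fun n => α n * ∫ ω, (a n ω - b ω) * d ω ∂μ) atTop (nhds L₁))
    (h₂ : Tendsto (fun n => α n * ∫ ω, (b ω - a n ω) * c n ω ∂μ) atTop (nhds L₂)) :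
    Tendsto (fun n => α n * ∫ ω, (a n ω - b ω) * (c n ω - d ω) ∂μ) atTop
      (nhds (-(L₁ + L₂))) := by
  have h := h₂.neg.sub h₁
  rw [show -L₂ - L₁ = -(L₁ + L₂) by ring] at h
  refine h.congr fun n => ?_
  rw [integral_mul_sub_sub_eq (hc n) (hd n)]
  ring

theorem integrable_sub_comp_mul_comp [IsFiniteMeasure μ] {E : Type*} [MeasurableSpace E]
    {φ χ : E → ℝ} (hφ : Measurable φ) (hφb : ∃ C, ∀ x, |φ x| ≤ C)
    (hχ : Measurable χ) (hχb : ∃ C, ∀ x, |χ x| ≤ C)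
    {Z Z' W : Ω → E} (hZ : Measurable Z) (hZ' : Measurable Z') (hW : Measurable W) :
    Integrable (fun ω => (φ (Z ω) - φ (Z' ω)) * χ (W ω)) μ := by
  obtain ⟨Cφ, hCφ⟩ := hφb
  obtain ⟨Cχ, hCχ⟩ := hχb
  have hmeas := ((hφ.comp hZ).sub (hφ.comp hZ')).mul (hχ.comp hW)
  refine Integrable.of_bound hmeas.aestronglyMeasurable ((Cφ + Cφ) * Cχ)
    (ae_of_all _ fun ω => ?_)
  have hsub : |φ (Z ω) - φ (Z' ω)| ≤ Cφ + Cφ :=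
    (abs_sub _ _).trans (add_le_add (hCφ _) (hCφ _))
  rw [Real.norm_eq_abs, abs_mul]
  exact mul_le_mul hsub (hCχ _) (abs_nonneg _) ((abs_nonneg _).trans hsub)

end

theorem integral_add_div_two_mul {E : Type*} [MeasurableSpace E] {ν : Measure E}
    {f g χ : E → ℝ} (hf : Integrable f ν) (hg : Integrable g ν)
    (hχ : AEStronglyMeasurable χ ν) (hχb : ∃ C, ∀ x, |χ x| ≤ C) :
    ∫ y, (f y + g y) / 2 * χ y ∂ν = (∫ y, f y * χ y ∂ν + ∫ y, g y * χ y ∂ν) / 2 := by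
  obtain ⟨C, hC⟩ := hχb
  have hbound : ∀ᵐ y ∂ν, ‖χ y‖ ≤ C := ae_of_all _ hC
  rw [← integral_add (hf.mul_bdd hχ hbound) (hg.mul_bdd hχ hbound), ← integral_div]
  congr 1 with y
  ring

theorem stmt14_general {Ω E : Type*} [MeasurableSpace Ω] [MeasurableSpace E]
    (μ : Measure Ω) [IsProbabilityMeasure μ]
    (Y : Ω → E) (Yn : ℕ → Ω → E) (hY : Measurable Y) (hYn : ∀ n, Measurable (Yn n))
    (D : Set (E → ℝ))
    (hDmeas : ∀ f ∈ D, Measurable f) (hDbdd : ∀ f ∈ D, ∃ C, ∀ x, |f x| ≤ C)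
    (α : ℕ → ℝ)
    (Abar Aund : (E → ℝ) → E → ℝ)
    (hAbarL2 : ∀ φ ∈ D, MemLp (Abar φ) 2 (μ.map Y))
    (hAundL2 : ∀ φ ∈ D, MemLp (Aund φ) 2 (μ.map Y))
    (hH1 : ∀ φ ∈ D, ∀ χ ∈ D,
      Tendsto (fun n => α n * ∫ ω, (φ (Yn n ω) - φ (Y ω)) * χ (Y ω) ∂μ) atTop
        (nhds (∫ y, Abar φ y * χ y ∂(μ.map Y))))
    (hH2 : ∀ φ ∈ D, ∀ χ ∈ D,
      Tendsto (fun n => α n * ∫ ω, (φ (Y ω) - φ (Yn n ω)) * χ (Yn n ω) ∂μ) atTop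
        (nhds (∫ y, Aund φ y * χ y ∂(μ.map Y)))) :
    ∀ φ ∈ D, MemLp (fun y => (Abar φ y + Aund φ y) / 2) 2 (μ.map Y) ∧
      ∀ χ ∈ D,
        Tendsto (fun n => α n * ∫ ω, (φ (Yn n ω) - φ (Y ω)) * (χ (Yn n ω) - χ (Y ω)) ∂μ)
          atTop
          (nhds (-2 * ∫ y, ((Abar φ y + Aund φ y) / 2) * χ y ∂(μ.map Y))) := by
  intro φ hφ
  refine ⟨by simpa only [Pi.add_apply, div_eq_mul_inv] using
    ((hAbarL2 φ hφ).add (hAundL2 φ hφ)).mul_const 2⁻¹, fun χ hχ => ?_⟩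
  have hlim := tendsto_mul_integral_mul_sub_sub
    (fun n => integrable_sub_comp_mul_comp (μ := μ) (hDmeas φ hφ) (hDbdd φ hφ)
      (hDmeas χ hχ) (hDbdd χ hχ) hY (hYn n) (hYn n))
    (fun n => integrable_sub_comp_mul_comp (hDmeas φ hφ) (hDbdd φ hφ)
      (hDmeas χ hχ) (hDbdd χ hχ) (hYn n) hY hY)
    (hH1 φ hφ χ hχ) (hH2 φ hφ χ hχ)
  rw [integral_add_div_two_mul ((hAbarL2 φ hφ).integrable one_le_two)
    ((hAundL2 φ hφ).integrable one_le_two) (hDmeas χ hχ).aestronglyMeasurable (hDbdd χ hχ)]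
  convert hlim using 2
  ring

/-- If hypotheses (H1) and (H2) hold with the same algebra `D` and the same sequence
`(αₙ)`, then (H3) holds with symmetric bias operator `Ã = (Ā + A̲)/2`. -/
theorem stmt14 {Ω E : Type*} [MeasurableSpace Ω] [MeasurableSpace E]
    (μ : Measure Ω) [IsProbabilityMeasure μ]
    (Y : Ω → E) (Yn : ℕ → Ω → E) (hY : Measurable Y) (hYn : ∀ n, Measurable (Yn n))
    (D : Set (E → ℝ))
    (hDmeas : ∀ f ∈ D, Measurable f) (hDbdd : ∀ f ∈ D, ∃ C, ∀ x, |f x| ≤ C)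
    (hDone : (fun _ => (1 : ℝ)) ∈ D)
    (hDadd : ∀ f ∈ D, ∀ g ∈ D, f + g ∈ D) (hDmul : ∀ f ∈ D, ∀ g ∈ D, f * g ∈ D)
    (hDsmul : ∀ c : ℝ, ∀ f ∈ D, c • f ∈ D)
    (hDdense : ∀ f : E → ℝ, MemLp f 2 (μ.map Y) → ∀ ε : ℝ, 0 < ε →
      ∃ g ∈ D, eLpNorm (f - g) 2 (μ.map Y) < ENNReal.ofReal ε)
    (α : ℕ → ℝ) (hα : ∀ n, 0 < α n)
    (Abar Aund : (E → ℝ) → E → ℝ)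
    (hAbarL2 : ∀ φ ∈ D, MemLp (Abar φ) 2 (μ.map Y))
    (hAundL2 : ∀ φ ∈ D, MemLp (Aund φ) 2 (μ.map Y))
    (hH1 : ∀ φ ∈ D, ∀ χ ∈ D,
      Tendsto (fun n => α n * ∫ ω, (φ (Yn n ω) - φ (Y ω)) * χ (Y ω) ∂μ) atTop
        (nhds (∫ y, Abar φ y * χ y ∂(μ.map Y))))
    (hH2 : ∀ φ ∈ D, ∀ χ ∈ D,
      Tendsto (fun n => α n * ∫ ω, (φ (Y ω) - φ (Yn n ω)) * χ (Yn n ω) ∂μ) atTop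
        (nhds (∫ y, Aund φ y * χ y ∂(μ.map Y))))
    (hconv : ∀ ψ ∈ D, Tendsto (fun n => ∫ ω, ψ (Yn n ω) ∂μ) atTop
      (nhds (∫ ω, ψ (Y ω) ∂μ))) :
    ∀ φ ∈ D, MemLp (fun y => (Abar φ y + Aund φ y) / 2) 2 (μ.map Y) ∧
      ∀ χ ∈ D,
        Tendsto (fun n => α n * ∫ ω, (φ (Yn n ω) - φ (Y ω)) * (χ (Yn n ω) - χ (Y ω)) ∂μ)
          atTop
          (nhds (-2 * ∫ y, ((Abar φ y + Aund φ y) / 2) * χ y ∂(μ.map Y))) :=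
  stmt14_general μ Y Yn hY hYn D hDmeas hDbdd α Abar Aund hAbarL2 hAundL2 hH1 hH2
end

section
/- Under (H3), the bilinear form Ẽ[φ,χ] = lim_n (α_n/2) E[(φ(Y_n)−φ(Y))(χ(Y_n)−χ(Y))] on D is nonnegative definite (Ẽ[φ,φ] ≥ 0), symmetric, and closable in L²(P_Y); moreover its square field operator satisfies Γ[φ] = Ã[φ²] − 2φÃ[φ] for φ ∈ D. -/
open MeasureTheory ProbabilityTheory Filter Topology

/-!
Write `⟨φ, χ⟩ₙ = E[(φ(Yₙ) - φ(Y))(χ(Yₙ) - χ(Y))]`. Each pre-limit form `αₙ ⟨·, ·⟩ₙ` is symmetric,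
nonnegative and bilinear, and these properties pass to the limit `-2 E_Y[Ã[φ] χ]`. Closability
follows from expanding `Ẽ[φₖ] = Ẽ[φₖ - φ_N] + 2 Ẽ[φ_N, φₖ] - Ẽ[φ_N]`: the last term is `≤ 0`,
and the cross term tends to `0` as `k → ∞` by Cauchy–Schwarz, since `φₖ → 0` in `L²`. The square
field operator comes from the pointwise identity
`(a' - a)² (c' + c) / 2 = -½ (a'² - a²)(c' - c) + (a' - a)(a'c' - ac)`.
-/

theorem neg_self_le_neg_sub_self_add_abs {X : Type*} [Sub X] {D : Set X} {B : X → X → ℝ}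
    (hsymm : ∀ f ∈ D, ∀ g ∈ D, B f g = B g f)
    (hsub : ∀ f ∈ D, ∀ g ∈ D, ∀ h ∈ D, B (f - g) h = B f h - B g h)
    {f g : X} (hf : f ∈ D) (hg : g ∈ D) (hfg : f - g ∈ D) (hgg : B g g ≤ 0) :
    -B f f ≤ -B (f - g) (f - g) + 2 * |B g f| := by
  have hexpand : B (f - g) (f - g) = B f f - 2 * B g f + B g g := by
    rw [hsymm _ hfg _ hfg, hsub f hf g hg _ hfg, hsymm f hf _ hfg, hsymm g hg _ hfg,
      hsub f hf g hg f hf, hsub f hf g hg g hg, hsymm f hf g hg]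
    ring
  linarith [neg_abs_le (B g f)]

theorem tendsto_zero_of_le_add_of_cauchy {e : ℕ → ℝ} {d c : ℕ → ℕ → ℝ} (he : ∀ k, 0 ≤ e k)
    (hle : ∀ k N, e k ≤ d k N + c N k) (hc : ∀ N, Tendsto (c N) atTop (𝓝 0))
    (hd : ∀ ε : ℝ, 0 < ε → ∃ N, ∀ k ≥ N, ∀ l ≥ N, d k l < ε) :
    Tendsto e atTop (𝓝 0) := by
  rw [Metric.tendsto_atTop]
  intro ε hε
  obtain ⟨N, hN⟩ := hd (ε / 2) (half_pos hε)
  obtain ⟨K, hK⟩ := eventually_atTop.1 ((hc N).eventually (gt_mem_nhds (half_pos hε)))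
  refine ⟨max N K, fun k hk => ?_⟩
  rw [Real.dist_0_eq_abs, abs_of_nonneg (he k)]
  linarith [hle k N, hN k (le_of_max_le_left hk) N le_rfl, hK k (le_of_max_le_right hk)]

theorem abs_integral_mul_le_eLpNorm_mul_eLpNorm {X : Type*} [MeasurableSpace X] {μ : Measure X}
    {f g : X → ℝ} (hf : MemLp f 2 μ) (hg : MemLp g 2 μ) :
    |∫ x, f x * g x ∂μ| ≤ (eLpNorm f 2 μ).toReal * (eLpNorm g 2 μ).toReal := by
  have hinner : ∫ x, f x * g x ∂μ = inner ℝ (hf.toLp f) (hg.toLp g) := by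
    rw [L2.inner_def]
    refine integral_congr_ae ?_
    filter_upwards [hf.coeFn_toLp, hg.coeFn_toLp] with x hfx hgx
    simp [hfx, hgx, mul_comm]
  rw [hinner, ← Lp.norm_toLp f hf, ← Lp.norm_toLp g hg]
  exact abs_real_inner_le_norm _ _

theorem memLp_of_abs_le {X : Type*} [MeasurableSpace X] {ν : Measure X} [IsFiniteMeasure ν]
    {f : X → ℝ} {C : ℝ} (hf : Measurable f) (hC : ∀ x, |f x| ≤ C) (p : ENNReal) : MemLp f p ν :=
  .of_bound hf.aestronglyMeasurable C (ae_of_all _ hC)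

section Increment

variable {Ω E : Type*} [MeasurableSpace Ω]

noncomputable def incrementPairing (μ : Measure Ω) (Y Y' : Ω → E) (φ χ : E → ℝ) : ℝ :=
  ∫ ω, (φ (Y' ω) - φ (Y ω)) * (χ (Y' ω) - χ (Y ω)) ∂μ

variable {μ : Measure Ω} {Y Y' : Ω → E}

theorem incrementPairing_comm (φ χ : E → ℝ) :
    incrementPairing μ Y Y' φ χ = incrementPairing μ Y Y' χ φ := by
  simp only [incrementPairing, mul_comm]

theorem incrementPairing_self_nonneg (φ : E → ℝ) : 0 ≤ incrementPairing μ Y Y' φ φ :=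
  integral_nonneg fun _ => mul_self_nonneg _

theorem incrementPairing_sub_left {f g χ : E → ℝ}
    (hf : Integrable (fun ω => (f (Y' ω) - f (Y ω)) * (χ (Y' ω) - χ (Y ω))) μ)
    (hg : Integrable (fun ω => (g (Y' ω) - g (Y ω)) * (χ (Y' ω) - χ (Y ω))) μ) :
    incrementPairing μ Y Y' (f - g) χ =
      incrementPairing μ Y Y' f χ - incrementPairing μ Y Y' g χ := by
  rw [incrementPairing, incrementPairing, incrementPairing, ← integral_sub hf hg]
  congr 1 with ω
  simp only [Pi.sub_apply]
  ring

theorem integral_sq_increment_mul_avg {φ χ : E → ℝ}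
    (hφφ : Integrable
      (fun ω => ((φ * φ) (Y' ω) - (φ * φ) (Y ω)) * (χ (Y' ω) - χ (Y ω))) μ)
    (hφχ : Integrable
      (fun ω => (φ (Y' ω) - φ (Y ω)) * ((φ * χ) (Y' ω) - (φ * χ) (Y ω))) μ) :
    ∫ ω, (φ (Y' ω) - φ (Y ω)) ^ 2 * ((χ (Y' ω) + χ (Y ω)) / 2) ∂μ =
      -(1 / 2) * incrementPairing μ Y Y' (φ * φ) χ + incrementPairing μ Y Y' φ (φ * χ) := by
  rw [incrementPairing, incrementPairing, ← integral_const_mul,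
    ← integral_add (hφφ.const_mul _) hφχ]
  congr 1 with ω
  simp only [Pi.mul_apply]
  ring

theorem integrable_increment_mul_increment [MeasurableSpace E] [IsFiniteMeasure μ] {f g : E → ℝ}
    {Cf Cg : ℝ} (hf : Measurable f) (hCf : ∀ x, |f x| ≤ Cf) (hg : Measurable g)
    (hCg : ∀ x, |g x| ≤ Cg) (hY : Measurable Y) (hY' : Measurable Y') :
    Integrable (fun ω => (f (Y' ω) - f (Y ω)) * (g (Y' ω) - g (Y ω))) μ := by
  have memLp_comp (h : E → ℝ) (hh : Measurable h) (C : ℝ) (hC : ∀ x, |h x| ≤ C) (Z : Ω → E)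
      (hZ : Measurable Z) : MemLp (h ∘ Z) 2 μ :=
    (memLp_of_abs_le hh hC 2).comp_of_map hZ.aemeasurable
  exact ((memLp_comp f hf Cf hCf Y' hY').sub (memLp_comp f hf Cf hCf Y hY)).integrable_mul
    ((memLp_comp g hg Cg hCg Y' hY').sub (memLp_comp g hg Cg hCg Y hY))

end Increment

section Limit

variable {Ω E : Type*} [MeasurableSpace Ω] [MeasurableSpace E]

/-- Hypothesis (H3), with `ν` in place of the law of `Y`. -/
def HasIncrementLimit (μ : Measure Ω) (Y : Ω → E) (Yn : ℕ → Ω → E) (α : ℕ → ℝ) (ν : Measure E)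
    (A : (E → ℝ) → E → ℝ) (D : Set (E → ℝ)) : Prop :=
  ∀ φ ∈ D, ∀ χ ∈ D, Tendsto (fun n => α n * incrementPairing μ Y (Yn n) φ χ)
    atTop (𝓝 (-2 * ∫ y, A φ y * χ y ∂ν))

variable {μ : Measure Ω} {Y : Ω → E} {Yn : ℕ → Ω → E} {α : ℕ → ℝ} {ν : Measure E}
  {A : (E → ℝ) → E → ℝ} {D : Set (E → ℝ)}

theorem HasIncrementLimit.integral_mul_comm (hlim : HasIncrementLimit μ Y Yn α ν A D)
    {φ χ : E → ℝ} (hφ : φ ∈ D) (hχ : χ ∈ D) :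
    ∫ y, A φ y * χ y ∂ν = ∫ y, A χ y * φ y ∂ν := by
  have h := tendsto_nhds_unique (hlim φ hφ χ hχ) <| by
    simpa only [incrementPairing_comm φ χ] using hlim χ hχ φ hφ
  linarith

theorem HasIncrementLimit.integral_mul_self_nonpos (hlim : HasIncrementLimit μ Y Yn α ν A D)
    (hα : ∀ n, 0 ≤ α n) {φ : E → ℝ} (hφ : φ ∈ D) :
    ∫ y, A φ y * φ y ∂ν ≤ 0 := by
  have h : 0 ≤ -2 * ∫ y, A φ y * φ y ∂ν :=
    ge_of_tendsto' (hlim φ hφ φ hφ) fun n => mul_nonneg (hα n) (incrementPairing_self_nonneg φ)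
  linarith

theorem HasIncrementLimit.integral_sub_mul (hlim : HasIncrementLimit μ Y Yn α ν A D)
    (hint : ∀ f ∈ D, ∀ g ∈ D, ∀ n,
      Integrable (fun ω => (f (Yn n ω) - f (Y ω)) * (g (Yn n ω) - g (Y ω))) μ)
    {f g χ : E → ℝ} (hf : f ∈ D) (hg : g ∈ D) (hfg : f - g ∈ D) (hχ : χ ∈ D) :
    ∫ y, A (f - g) y * χ y ∂ν = ∫ y, A f y * χ y ∂ν - ∫ y, A g y * χ y ∂ν := by
  have h := tendsto_nhds_unique (hlim (f - g) hfg χ hχ) <| by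
    refine ((hlim f hf χ hχ).sub (hlim g hg χ hχ)).congr fun n => ?_
    rw [incrementPairing_sub_left (hint f hf χ hχ n) (hint g hg χ hχ n)]
    ring
  linarith

theorem HasIncrementLimit.tendsto_integral_sq_increment_mul_avg
    (hlim : HasIncrementLimit μ Y Yn α ν A D)
    (hint : ∀ f ∈ D, ∀ g ∈ D, ∀ n,
      Integrable (fun ω => (f (Yn n ω) - f (Y ω)) * (g (Yn n ω) - g (Y ω))) μ)
    (hintA : ∀ f ∈ D, ∀ g ∈ D, Integrable (fun y => A f y * g y) ν)
    (hmul : ∀ f ∈ D, ∀ g ∈ D, f * g ∈ D) {φ χ : E → ℝ} (hφ : φ ∈ D) (hχ : χ ∈ D) :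
    Tendsto (fun n => α n * ∫ ω, (φ (Yn n ω) - φ (Y ω)) ^ 2 * ((χ (Yn n ω) + χ (Y ω)) / 2) ∂μ)
      atTop (𝓝 (∫ y, (A (φ * φ) y - 2 * φ y * A φ y) * χ y ∂ν)) := by
  have hφφ := hmul φ hφ φ hφ
  have hφχ := hmul φ hφ χ hχ
  have hval : ∫ y, (A (φ * φ) y - 2 * φ y * A φ y) * χ y ∂ν =
      -(1 / 2) * (-2 * ∫ y, A (φ * φ) y * χ y ∂ν) + -2 * ∫ y, A φ y * (φ * χ) y ∂ν := by
    calc ∫ y, (A (φ * φ) y - 2 * φ y * A φ y) * χ y ∂ν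
        = ∫ y, (A (φ * φ) y * χ y - 2 * (A φ y * (φ * χ) y)) ∂ν := by
          congr 1 with y
          simp only [Pi.mul_apply]
          ring
      _ = _ := by
          rw [integral_sub (hintA _ hφφ χ hχ) ((hintA φ hφ _ hφχ).const_mul 2),
            integral_const_mul]
          ring
  rw [hval]
  refine (((hlim _ hφφ χ hχ).const_mul (-(1 / 2))).add (hlim φ hφ _ hφχ)).congr fun n => ?_
  rw [integral_sq_increment_mul_avg (hint _ hφφ χ hχ n) (hint φ hφ _ hφχ n)]
  ring

end Limit

theorem tendsto_neg_integral_mul_self_of_cauchy {E : Type*} [MeasurableSpace E] {ν : Measure E}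
    {A : (E → ℝ) → E → ℝ} {D : Set (E → ℝ)}
    (hsymm : ∀ f ∈ D, ∀ g ∈ D, ∫ y, A f y * g y ∂ν = ∫ y, A g y * f y ∂ν)
    (hnonpos : ∀ f ∈ D, ∫ y, A f y * f y ∂ν ≤ 0)
    (hsub : ∀ f ∈ D, ∀ g ∈ D, ∀ χ ∈ D,
      ∫ y, A (f - g) y * χ y ∂ν = ∫ y, A f y * χ y ∂ν - ∫ y, A g y * χ y ∂ν)
    (hDsub : ∀ f ∈ D, ∀ g ∈ D, f - g ∈ D)
    (hA : ∀ f ∈ D, MemLp (A f) 2 ν) (hD : ∀ f ∈ D, MemLp f 2 ν)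
    {φ : ℕ → E → ℝ} (hφ : ∀ k, φ k ∈ D)
    (h0 : Tendsto (fun k => eLpNorm (φ k) 2 ν) atTop (𝓝 0))
    (hcauchy : ∀ ε : ℝ, 0 < ε → ∃ N, ∀ k ≥ N, ∀ l ≥ N,
      -(∫ y, A (φ k - φ l) y * (φ k - φ l) y ∂ν) < ε) :
    Tendsto (fun k => -(∫ y, A (φ k) y * φ k y ∂ν)) atTop (𝓝 0) := by
  have h0' : Tendsto (fun k => (eLpNorm (φ k) 2 ν).toReal) atTop (𝓝 0) := by
    simpa [Function.comp_def] using (ENNReal.tendsto_toReal ENNReal.zero_ne_top).comp h0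
  refine tendsto_zero_of_le_add_of_cauchy (fun k => neg_nonneg.2 (hnonpos _ (hφ k)))
    (c := fun N k => 2 * |∫ y, A (φ N) y * φ k y ∂ν|) (fun k N => ?_) (fun N => ?_) hcauchy
  · exact neg_self_le_neg_sub_self_add_abs (B := fun f g => ∫ y, A f y * g y ∂ν) hsymm hsub
      (hφ k) (hφ N) (hDsub _ (hφ k) _ (hφ N)) (hnonpos _ (hφ N))
  · have hbound := (h0'.const_mul ((eLpNorm (A (φ N)) 2 ν).toReal)).const_mul 2
    rw [mul_zero, mul_zero] at hbound
    refine squeeze_zero (fun k => by positivity) (fun k => ?_) hbound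
    exact mul_le_mul_of_nonneg_left
      (abs_integral_mul_le_eLpNorm_mul_eLpNorm (hA _ (hφ N)) (hD _ (hφ k))) zero_le_two

theorem stmt16_general {Ω E : Type*} [MeasurableSpace Ω] [MeasurableSpace E]
    (μ : Measure Ω) [IsProbabilityMeasure μ]
    (Y : Ω → E) (Yn : ℕ → Ω → E) (hY : Measurable Y) (hYn : ∀ n, Measurable (Yn n))
    (D : Set (E → ℝ))
    (hDmeas : ∀ f ∈ D, Measurable f) (hDbdd : ∀ f ∈ D, ∃ C, ∀ x, |f x| ≤ C)
    (hDsub : ∀ f ∈ D, ∀ g ∈ D, f - g ∈ D) (hDmul : ∀ f ∈ D, ∀ g ∈ D, f * g ∈ D)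
    (α : ℕ → ℝ) (hα : ∀ n, 0 < α n)
    (Atil : (E → ℝ) → E → ℝ)
    (hAtilL2 : ∀ φ ∈ D, MemLp (Atil φ) 2 (μ.map Y))
    (hH3 : ∀ φ ∈ D, ∀ χ ∈ D,
      Tendsto (fun n => α n * ∫ ω, (φ (Yn n ω) - φ (Y ω)) * (χ (Yn n ω) - χ (Y ω)) ∂μ)
        atTop (nhds (-2 * ∫ y, Atil φ y * χ y ∂(μ.map Y)))) :
    -- nonnegativity of Ẽ
    (∀ φ ∈ D, 0 ≤ -(∫ y, Atil φ y * φ y ∂(μ.map Y))) ∧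
    -- symmetry of Ẽ
    (∀ φ ∈ D, ∀ χ ∈ D,
      ∫ y, Atil φ y * χ y ∂(μ.map Y) = ∫ y, Atil χ y * φ y ∂(μ.map Y)) ∧
    -- closability
    (∀ φ : ℕ → E → ℝ, (∀ k, φ k ∈ D) →
      Tendsto (fun k => eLpNorm (φ k) 2 (μ.map Y)) atTop (nhds 0) →
      (∀ ε : ℝ, 0 < ε → ∃ N, ∀ k ≥ N, ∀ l ≥ N,
        -(∫ y, Atil (φ k - φ l) y * (φ k - φ l) y ∂(μ.map Y)) < ε) →
      Tendsto (fun k => -(∫ y, Atil (φ k) y * φ k y ∂(μ.map Y))) atTop (nhds 0)) ∧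
    -- the square field operator Γ[φ] = Ã[φ²] - 2φÃ[φ]
    (∀ φ ∈ D, ∀ χ ∈ D,
      Tendsto (fun n =>
          α n * ∫ ω, (φ (Yn n ω) - φ (Y ω)) ^ 2 * ((χ (Yn n ω) + χ (Y ω)) / 2) ∂μ)
        atTop
        (nhds (∫ y, (Atil (φ * φ) y - 2 * φ y * Atil φ y) * χ y ∂(μ.map Y)))) := by
  have hD2 : ∀ f ∈ D, MemLp f 2 (μ.map Y) := fun f hf =>
    (hDbdd f hf).elim fun _ hC => memLp_of_abs_le (hDmeas f hf) hC 2
  have hint : ∀ f ∈ D, ∀ g ∈ D, ∀ n,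
      Integrable (fun ω => (f (Yn n ω) - f (Y ω)) * (g (Yn n ω) - g (Y ω))) μ := by
    intro f hf g hg n
    obtain ⟨_, hCf⟩ := hDbdd f hf
    obtain ⟨_, hCg⟩ := hDbdd g hg
    exact integrable_increment_mul_increment (hDmeas f hf) hCf (hDmeas g hg) hCg hY (hYn n)
  have hlim : HasIncrementLimit μ Y Yn α (μ.map Y) Atil D := hH3
  have hsymm := fun φ (hφ : φ ∈ D) χ (hχ : χ ∈ D) => hlim.integral_mul_comm hφ hχ
  have hnonpos := fun φ (hφ : φ ∈ D) => hlim.integral_mul_self_nonpos (fun n => (hα n).le) hφ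
  have hsub := fun f (hf : f ∈ D) g (hg : g ∈ D) χ (hχ : χ ∈ D) =>
    hlim.integral_sub_mul hint hf hg (hDsub f hf g hg) hχ
  have hintA : ∀ f ∈ D, ∀ g ∈ D, Integrable (fun y => Atil f y * g y) (μ.map Y) :=
    fun f hf g hg => (hAtilL2 f hf).integrable_mul (hD2 g hg)
  exact ⟨fun φ hφ => neg_nonneg.2 (hnonpos φ hφ), hsymm,
    fun φ hφ h0 hcauchy =>
      tendsto_neg_integral_mul_self_of_cauchy hsymm hnonpos hsub hDsub hAtilL2 hD2 hφ h0 hcauchy,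
    fun φ hφ χ hχ => hlim.tendsto_integral_sq_increment_mul_avg hint hintA hDmul hφ hχ⟩

/-- Under (H3), the form `Ẽ[φ,χ] = lim (αₙ/2) E[(φ(Yₙ)-φ(Y))(χ(Yₙ)-χ(Y))] = -E_Y[Ã[φ]χ]`
is nonnegative, symmetric and closable, and its square field operator is
`Γ[φ] = Ã[φ²] - 2φÃ[φ]`. -/
theorem stmt16 {Ω E : Type*} [MeasurableSpace Ω] [MeasurableSpace E]
    (μ : Measure Ω) [IsProbabilityMeasure μ]
    (Y : Ω → E) (Yn : ℕ → Ω → E) (hY : Measurable Y) (hYn : ∀ n, Measurable (Yn n))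
    (D : Set (E → ℝ))
    (hDmeas : ∀ f ∈ D, Measurable f) (hDbdd : ∀ f ∈ D, ∃ C, ∀ x, |f x| ≤ C)
    (hDone : (fun _ => (1 : ℝ)) ∈ D)
    (hDsub : ∀ f ∈ D, ∀ g ∈ D, f - g ∈ D) (hDmul : ∀ f ∈ D, ∀ g ∈ D, f * g ∈ D)
    (hDdense : ∀ f : E → ℝ, MemLp f 2 (μ.map Y) → ∀ ε : ℝ, 0 < ε →
      ∃ g ∈ D, eLpNorm (f - g) 2 (μ.map Y) < ENNReal.ofReal ε)
    (α : ℕ → ℝ) (hα : ∀ n, 0 < α n)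
    (Atil : (E → ℝ) → E → ℝ)
    (hAtilL2 : ∀ φ ∈ D, MemLp (Atil φ) 2 (μ.map Y))
    (hH3 : ∀ φ ∈ D, ∀ χ ∈ D,
      Tendsto (fun n => α n * ∫ ω, (φ (Yn n ω) - φ (Y ω)) * (χ (Yn n ω) - χ (Y ω)) ∂μ)
        atTop (nhds (-2 * ∫ y, Atil φ y * χ y ∂(μ.map Y)))) :
    -- nonnegativity of Ẽ
    (∀ φ ∈ D, 0 ≤ -(∫ y, Atil φ y * φ y ∂(μ.map Y))) ∧
    -- symmetry of Ẽ
    (∀ φ ∈ D, ∀ χ ∈ D,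
      ∫ y, Atil φ y * χ y ∂(μ.map Y) = ∫ y, Atil χ y * φ y ∂(μ.map Y)) ∧
    -- closability
    (∀ φ : ℕ → E → ℝ, (∀ k, φ k ∈ D) →
      Tendsto (fun k => eLpNorm (φ k) 2 (μ.map Y)) atTop (nhds 0) →
      (∀ ε : ℝ, 0 < ε → ∃ N, ∀ k ≥ N, ∀ l ≥ N,
        -(∫ y, Atil (φ k - φ l) y * (φ k - φ l) y ∂(μ.map Y)) < ε) →
      Tendsto (fun k => -(∫ y, Atil (φ k) y * φ k y ∂(μ.map Y))) atTop (nhds 0)) ∧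
    -- the square field operator Γ[φ] = Ã[φ²] - 2φÃ[φ]
    (∀ φ ∈ D, ∀ χ ∈ D,
      Tendsto (fun n =>
          α n * ∫ ω, (φ (Yn n ω) - φ (Y ω)) ^ 2 * ((χ (Yn n ω) + χ (Y ω)) / 2) ∂μ)
        atTop
        (nhds (∫ y, (Atil (φ * φ) y - 2 * φ y * Atil φ y) * χ y ∂(μ.map Y)))) :=
  stmt16_general μ Y Yn hY hYn D hDmeas hDbdd hDsub hDmul α hα Atil hAtilL2 hH3
end
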